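/- arXiv:2112.00693 — 2 statements merged into one kernel-verified Lean document; each statement's English description precedes it below -/
import Mathlib

section
/- Let A be an n×n real symmetric positive definite m-banded matrix (A_ij = 0 when |i−j| > m/2) whose spectrum lies in [a, b] with 0 < a ≤ b. Set r = b/a, q = (√r − 1)/(√r + 1), λ = q^{2/m}, C₀ = (1 + √r)²/(2ar), and C = max{a^{−1}, C₀}. Then the entries of the inverse satisfy |(A^{−1})_ij| ≤ C λ^{|i−j|} for all i, j. -/
open Matrix Real

section DMSAux

open Polynomial Polynomial.Chebyshev

lemma natDegree_T_le : ∀ (k : ℕ), (T ℝ (k : ℤ)).natDegree ≤ k := by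
  intro k
  induction k using Nat.strong_induction_on with
  | _ k ih =>
    match k with
    | 0 => simp
    | 1 => simp
    | (k+2) =>
      have h : ((k+2 : ℕ) : ℤ) = (k : ℤ) + 2 := by push_cast; ring
      rw [h, T_add_two]
      refine le_trans (natDegree_sub_le _ _) (max_le ?_ ?_)
      · refine le_trans natDegree_mul_le ?_
        have h1 : ((k+1 : ℕ) : ℤ) = (k : ℤ) + 1 := by push_cast; ring
        have := ih (k+1) (by omega)
        rw [h1] at this
        have h2 : (2 * X : ℝ[X]).natDegree ≤ 1 := by
          refine le_trans natDegree_mul_le ?_; simp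
        omega
      · have := ih k (by omega); omega

lemma natDegree_T_le' (n : ℤ) : (T ℝ n).natDegree ≤ n.natAbs := by
  rw [← T_natAbs]; exact natDegree_T_le n.natAbs

lemma T_eval_half_add (y : ℝ) (hy : y ≠ 0) (n : ℤ) :
    (T ℝ n).eval ((y + y⁻¹) / 2) = (y ^ n + y⁻¹ ^ n) / 2 := by
  have hy' : y⁻¹ ≠ 0 := inv_ne_zero hy
  have hyv : y * y⁻¹ = 1 := mul_inv_cancel₀ hy
  induction n using Polynomial.Chebyshev.induct with
  | zero => simp
  | one =>
    simp only [T_one, eval_X, zpow_one]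
  | add_two k ih1 ih2 =>
    rw [T_add_two]
    simp only [eval_sub, eval_mul, eval_ofNat, eval_X] at *
    rw [ih1, ih2]
    have e1 : y ^ ((k : ℤ) + 2) = y ^ (k : ℤ) * y * y := by
      rw [show ((k:ℤ)+2) = (k:ℤ)+1+1 by ring, zpow_add_one₀ hy, zpow_add_one₀ hy]
    have e2 : y⁻¹ ^ ((k : ℤ) + 2) = y⁻¹ ^ (k : ℤ) * y⁻¹ * y⁻¹ := by
      rw [show ((k:ℤ)+2) = (k:ℤ)+1+1 by ring, zpow_add_one₀ hy', zpow_add_one₀ hy']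
    have e3 : y ^ ((k : ℤ) + 1) = y ^ (k : ℤ) * y := zpow_add_one₀ hy _
    have e4 : y⁻¹ ^ ((k : ℤ) + 1) = y⁻¹ ^ (k : ℤ) * y⁻¹ := zpow_add_one₀ hy' _
    rw [e1, e2, e3, e4]
    linear_combination ((y ^ (k:ℤ) + y⁻¹ ^ (k:ℤ)) / 2) * hyv
  | neg_add_one k ih1 ih2 =>
    have hrec : T ℝ (-(k : ℤ) - 1) = 2 * X * T ℝ (-(k : ℤ)) - T ℝ (-(k : ℤ) + 1) := by
      have := T_sub_one ℝ (-(k : ℤ))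
      simpa using this
    rw [hrec]
    simp only [eval_sub, eval_mul, eval_ofNat, eval_X] at *
    rw [ih1, ih2]
    have e1 : y ^ (-(k : ℤ) - 1) = y ^ (-(k : ℤ)) * y⁻¹ := zpow_sub_one₀ hy _
    have e2 : y⁻¹ ^ (-(k : ℤ) - 1) = y⁻¹ ^ (-(k : ℤ)) * y⁻¹⁻¹ := zpow_sub_one₀ hy' _
    have e3 : y ^ (-(k : ℤ) + 1) = y ^ (-(k : ℤ)) * y := zpow_add_one₀ hy _
    have e4 : y⁻¹ ^ (-(k : ℤ) + 1) = y⁻¹ ^ (-(k : ℤ)) * y⁻¹ := zpow_add_one₀ hy' _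
    have e5 : -(-(k:ℤ) - 1) = (k:ℤ) + 1 := by ring
    have e6 : -(-(k:ℤ) + 1) = (k:ℤ) - 1 := by ring
    rw [e1, e2, e3, e4, inv_inv]
    ring

lemma S_trig_bound (u t : ℝ) (hu : 0 ≤ u) (hu1 : u ≤ 1) (ht : -1 ≤ t) (ht1 : t ≤ 1) (k : ℕ) :
    |(T ℝ ((k : ℤ) + 1)).eval t - 2*u*(T ℝ (k : ℤ)).eval t + u^2*(T ℝ ((k : ℤ) - 1)).eval t|
      ≤ 1 - 2*u*t + u^2 := by
  set θ := Real.arccos t with hθ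
  have hct : Real.cos θ = t := Real.cos_arccos ht ht1
  rw [← hct]
  rw [T_real_cos θ ((k : ℤ) + 1), T_real_cos θ (k : ℤ), T_real_cos θ ((k : ℤ) - 1)]
  have h1 : (((k : ℤ) + 1 : ℤ) : ℝ) * θ = (k : ℝ) * θ + θ := by push_cast; ring
  have h2 : (((k : ℤ) - 1 : ℤ) : ℝ) * θ = (k : ℝ) * θ - θ := by push_cast; ring
  have h3 : (((k : ℤ) : ℤ) : ℝ) * θ = (k : ℝ) * θ := by push_cast; ring
  rw [h1, h2, h3, Real.cos_add, Real.cos_sub]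
  set c := Real.cos θ
  set s := Real.sin θ
  set ck := Real.cos ((k : ℝ) * θ)
  set sk := Real.sin ((k : ℝ) * θ)
  have hcs : s^2 = 1 - c^2 := by
    have := Real.sin_sq_add_cos_sq θ; nlinarith
  have hck : sk^2 = 1 - ck^2 := by
    have := Real.sin_sq_add_cos_sq ((k : ℝ) * θ); nlinarith
  have hc1 : -1 ≤ c := Real.neg_one_le_cos θ
  have hc2 : c ≤ 1 := Real.cos_le_one θ
  -- expression equals X * ck - Y * sk with X = (1+u²)c - 2u, Y = (1-u²)s
  have hD : 0 ≤ 1 - 2*u*c + u^2 := by nlinarith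
  have key : (ck * c - sk * s - 2*u*ck + u^2*(ck * c + sk * s))^2 ≤ (1 - 2*u*c + u^2)^2 := by
    have expand : ck * c - sk * s - 2*u*ck + u^2*(ck * c + sk * s)
        = ((1+u^2)*c - 2*u) * ck - ((1-u^2)*s) * sk := by ring
    rw [expand]
    have cs : (((1+u^2)*c - 2*u) * ck - ((1-u^2)*s) * sk)^2
        ≤ (((1+u^2)*c - 2*u)^2 + ((1-u^2)*s)^2) * (ck^2 + sk^2) := by
      nlinarith [sq_nonneg (((1+u^2)*c - 2*u) * sk + ((1-u^2)*s) * ck)]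
    have hcksq : ck^2 + sk^2 = 1 := by rw [hck]; ring
    have hXY : ((1+u^2)*c - 2*u)^2 + ((1-u^2)*s)^2 = (1 - 2*u*c + u^2)^2 := by
      rw [show ((1-u^2)*s)^2 = (1-u^2)^2 * s^2 by ring, hcs]; ring
    rw [hcksq, hXY] at cs
    linarith
  rw [abs_le]
  constructor <;> nlinarith [key]

set_option maxHeartbeats 1600000 in
lemma inv_approx (a b : ℝ) (ha : 0 < a) (hab : a < b) (k : ℕ) :
    ∃ p : Polynomial ℝ, p.natDegree ≤ k ∧ ∀ x ∈ Set.Icc a b,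
      |x⁻¹ - p.eval x| ≤ (Real.sqrt a + Real.sqrt b)^2/(2*a*b) *
        ((Real.sqrt b - Real.sqrt a)/(Real.sqrt b + Real.sqrt a))^(k+1) := by
  set sa := Real.sqrt a with hsa_def
  set sb := Real.sqrt b with hsb_def
  have hsa2 : sa^2 = a := Real.sq_sqrt ha.le
  have hsb2 : sb^2 = b := Real.sq_sqrt (lt_trans ha hab).le
  have hsa0 : 0 < sa := Real.sqrt_pos.mpr ha
  have hsb0 : 0 < sb := Real.sqrt_pos.mpr (lt_trans ha hab)
  have hsalt : sa < sb := by
    have := Real.sqrt_lt_sqrt ha.le hab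
    simpa [hsa_def, hsb_def] using this
  have hsum : (0:ℝ) < sb + sa := by linarith
  have hdiff : (0:ℝ) < sb - sa := by linarith
  set u := (sb - sa)/(sb + sa) with hu_def
  have hu0 : 0 < u := div_pos hdiff hsum
  have hu1 : u < 1 := by
    rw [div_lt_one hsum]; linarith
  have hune : u ≠ 0 := ne_of_gt hu0
  have h1mu2 : 1 - u^2 = 4*sa*sb/(sb+sa)^2 := by
    rw [hu_def, div_pow, one_sub_div (pow_pos hsum 2).ne']; congr 1; ring
  have h1mu2pos : 0 < 1 - u^2 := by
    rw [h1mu2]; positivity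
  have hba : (0:ℝ) < b - a := by linarith
  -- the affine map
  set tp : Polynomial ℝ := C ((a+b)/(b-a)) - C (2/(b-a)) * X with htp_def
  have htp_eval : ∀ x : ℝ, tp.eval x = (a + b - 2*x)/(b-a) := by
    intro x; simp [htp_def]; ring
  -- the S polynomial
  set S : Polynomial ℝ := (T ℝ ((k:ℤ)+1)).comp tp - C (2*u) * ((T ℝ (k:ℤ)).comp tp)
      + C (u^2) * ((T ℝ ((k:ℤ)-1)).comp tp) with hS_def
  set β : ℝ := 2*u^(k+1)/(1-u^2)^2 with hβ_def
  have hβpos : 0 < β := by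
    apply div_pos; positivity; positivity
  set R : Polynomial ℝ := C β * S with hR_def
  -- evaluation of S at any x
  have hS_eval : ∀ x : ℝ, S.eval x = (T ℝ ((k:ℤ)+1)).eval (tp.eval x)
      - 2*u*(T ℝ (k:ℤ)).eval (tp.eval x) + u^2*(T ℝ ((k:ℤ)-1)).eval (tp.eval x) := by
    intro x; simp only [hS_def, eval_add, eval_sub, eval_mul, eval_C, eval_comp]
  -- value at 0
  have htp0 : tp.eval 0 = (u + u⁻¹)/2 := by
    rw [htp_eval]
    rw [hu_def]
    rw [show a = sa^2 by rw [hsa2], show b = sb^2 by rw [hsb2]]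
    rw [inv_div]
    have hne : -sa^2 + sb^2 ≠ 0 := by nlinarith
    field_simp [hne]
    linear_combination (2*(sb^2+sa^2)) * (mul_inv_cancel₀ hne)
  have hS0 : S.eval 0 = (1-u^2)^2/(2*u^(k+1)) := by
    rw [hS_eval, htp0, T_eval_half_add u hune, T_eval_half_add u hune, T_eval_half_add u hune]
    have e1 : u ^ ((k:ℤ)+1) = u^(k+1) := by
      rw [show (k:ℤ)+1 = ((k+1:ℕ):ℤ) by push_cast; ring, zpow_natCast]
    have e2 : u⁻¹ ^ ((k:ℤ)+1) = (u^(k+1))⁻¹ := by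
      rw [show (k:ℤ)+1 = ((k+1:ℕ):ℤ) by push_cast; ring, zpow_natCast, inv_pow]
    have e3 : u ^ ((k:ℤ)) = u^k := by rw [zpow_natCast]
    have e4 : u⁻¹ ^ ((k:ℤ)) = (u^k)⁻¹ := by rw [zpow_natCast, inv_pow]
    have e5 : u ^ ((k:ℤ)-1) = u^k * u⁻¹ := zpow_sub_one₀ hune _
    have e6 : u⁻¹ ^ ((k:ℤ)-1) = (u^k)⁻¹ * u := by
      rw [zpow_sub_one₀ (inv_ne_zero hune) (k:ℤ), zpow_natCast, inv_pow, inv_inv]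
    rw [e1, e2, e3, e4, e5, e6]
    have hpk : u^k ≠ 0 := pow_ne_zero _ hune
    have hpk1 : u^(k+1) ≠ 0 := pow_ne_zero _ hune
    field_simp
    ring
  have hR0 : R.eval 0 = 1 := by
    rw [hR_def]
    simp only [eval_mul, eval_C]
    rw [hS0, hβ_def]
    field_simp
  -- the polynomial p
  set p : Polynomial ℝ := (1 - R).divX with hp_def
  have hcoeff0 : (1 - R).coeff 0 = 0 := by
    rw [coeff_zero_eq_eval_zero]
    simp [hR0]
  have hXp : X * p = 1 - R := by
    have := X_mul_divX_add (1 - R)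
    rw [hcoeff0] at this
    simpa [hp_def] using this
  -- degree bounds
  have htpdeg : tp.natDegree ≤ 1 := by
    refine le_trans (natDegree_sub_le _ _) (max_le ?_ ?_)
    · simp
    · refine le_trans natDegree_mul_le ?_; simp
  have hcompdeg : ∀ (j : ℤ), j.natAbs ≤ k+1 → ((T ℝ j).comp tp).natDegree ≤ k + 1 := by
    intro j hj
    refine le_trans natDegree_comp_le ?_
    calc (T ℝ j).natDegree * tp.natDegree ≤ (k+1) * 1 :=
          Nat.mul_le_mul (le_trans (natDegree_T_le' j) hj) htpdeg
      _ = k + 1 := by ring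
  have hSdeg : S.natDegree ≤ k + 1 := by
    rw [hS_def]
    have hA1 : ((T ℝ ((k:ℤ)+1)).comp tp).natDegree ≤ k+1 := hcompdeg ((k:ℤ)+1) (by omega)
    have hA2 : ((T ℝ ((k:ℤ))).comp tp).natDegree ≤ k+1 := hcompdeg ((k:ℤ)) (by omega)
    have hA3 : ((T ℝ ((k:ℤ)-1)).comp tp).natDegree ≤ k+1 := hcompdeg ((k:ℤ)-1) (by omega)
    have hB2 : (C (2*u) * ((T ℝ ((k:ℤ))).comp tp)).natDegree ≤ k+1 := by
      refine le_trans natDegree_mul_le ?_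
      rw [natDegree_C]
      omega
    have hB3 : (C (u^2) * ((T ℝ ((k:ℤ)-1)).comp tp)).natDegree ≤ k+1 := by
      refine le_trans natDegree_mul_le ?_
      rw [natDegree_C]
      omega
    refine le_trans (natDegree_add_le _ _) (max_le (le_trans (natDegree_sub_le _ _) (max_le hA1 hB2)) hB3)
  have hRdeg : (1 - R).natDegree ≤ k + 1 := by
    refine le_trans (natDegree_sub_le _ _) (max_le (by simp) ?_)
    rw [hR_def]
    refine le_trans natDegree_mul_le ?_
    rw [natDegree_C]
    omega
  have hpdeg : p.natDegree ≤ k := by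
    rw [natDegree_le_iff_coeff_eq_zero]
    intro N hN
    rw [hp_def, coeff_divX]
    exact coeff_eq_zero_of_natDegree_lt (lt_of_le_of_lt hRdeg (by omega))
  refine ⟨p, hpdeg, ?_⟩
  intro x hx
  obtain ⟨hxa, hxb⟩ := hx
  have hx0 : 0 < x := lt_of_lt_of_le ha hxa
  -- t in [-1,1]
  have ht1 : tp.eval x ≤ 1 := by
    rw [htp_eval, div_le_one hba]; linarith
  have ht2 : -1 ≤ tp.eval x := by
    rw [htp_eval, le_div_iff₀ hba]; linarith
  -- key identity
  have hkey : 1 - 2*u*(tp.eval x) + u^2 = 4*x/(sb+sa)^2 := by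
    rw [htp_eval, hu_def]
    rw [show a = sa^2 by rw [hsa2], show b = sb^2 by rw [hsb2]]
    have hne : -sa^2 + sb^2 ≠ 0 := by nlinarith
    have hne2 : sb^2 - sa^2 ≠ 0 := by nlinarith
    field_simp [hne, hne2]
    ring
  -- bound on S.eval x
  have hSbound : |S.eval x| ≤ 4*x/(sb+sa)^2 := by
    rw [hS_eval, ← hkey]
    exact S_trig_bound u (tp.eval x) hu0.le hu1.le ht2 ht1 k
  -- bound on R.eval x
  have hRbound : |R.eval x| ≤ β * (4*x/(sb+sa)^2) := by
    rw [hR_def]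
    simp only [eval_mul, eval_C, abs_mul]
    rw [abs_of_pos hβpos]
    exact mul_le_mul_of_nonneg_left hSbound hβpos.le
  -- the error identity
  have herr : x⁻¹ - p.eval x = R.eval x / x := by
    have := congrArg (eval x) hXp
    simp only [eval_mul, eval_X, eval_sub, eval_one] at this
    field_simp
    linarith [this]
  rw [herr, abs_div, abs_of_pos hx0]
  rw [div_le_iff₀ hx0]
  refine le_trans hRbound ?_
  -- final constant computation
  have hfinal : β * (4*x/(sb+sa)^2) =
      ((sa+sb)^2/(2*a*b) * u^(k+1)) * x := by
    rw [hβ_def, h1mu2]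
    rw [show a = sa^2 by rw [hsa2], show b = sb^2 by rw [hsb2]]
    field_simp
    ring
  rw [hfinal]

end DMSAux

section DMSMatrix

open Matrix Polynomial

lemma band_pow {n : ℕ} (m : ℕ) (A : Matrix (Fin n) (Fin n) ℝ)
    (hband : ∀ i j : Fin n, m < 2 * ((i : ℤ) - (j : ℤ)).natAbs → A i j = 0) :
    ∀ (s : ℕ) (i j : Fin n), m * s < 2 * ((i : ℤ) - (j : ℤ)).natAbs → (A ^ s) i j = 0 := by
  intro s
  induction s with
  | zero =>
    intro i j h
    have hij : i ≠ j := by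
      intro he; subst he; simp at h
    simp [Matrix.one_apply, hij]
  | succ s ih =>
    intro i j h
    rw [pow_succ]
    rw [Matrix.mul_apply]
    apply Finset.sum_eq_zero
    intro l _
    by_cases hl : m * s < 2 * ((i : ℤ) - (l : ℤ)).natAbs
    · rw [ih i l hl, zero_mul]
    · have h2 : m < 2 * ((l : ℤ) - (j : ℤ)).natAbs := by
        have htri : ((i : ℤ) - (j : ℤ)).natAbs ≤ ((i : ℤ) - (l : ℤ)).natAbs + ((l : ℤ) - (j : ℤ)).natAbs := by
          have : (i : ℤ) - (j : ℤ) = ((i : ℤ) - (l : ℤ)) + ((l : ℤ) - (j : ℤ)) := by ring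
          rw [this]
          exact Int.natAbs_add_le _ _
        have hms : m * (s+1) = m*s + m := by ring
        omega
      rw [hband l j h2, mul_zero]

lemma aeval_band {n : ℕ} (m k : ℕ) (A : Matrix (Fin n) (Fin n) ℝ)
    (hband : ∀ i j : Fin n, m < 2 * ((i : ℤ) - (j : ℤ)).natAbs → A i j = 0)
    (p : Polynomial ℝ) (hp : p.natDegree ≤ k) (i j : Fin n)
    (h : m * k < 2 * ((i : ℤ) - (j : ℤ)).natAbs) :
    (Polynomial.aeval A p) i j = 0 := by
  rw [Polynomial.aeval_eq_sum_range' (lt_of_le_of_lt hp (Nat.lt_succ_self k))]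
  rw [Matrix.sum_apply]
  apply Finset.sum_eq_zero
  intro s hs
  rw [Finset.mem_range] at hs
  have hsk : s ≤ k := by omega
  have : (A ^ s) i j = 0 := by
    apply band_pow m A hband
    have : m * s ≤ m * k := Nat.mul_le_mul_left m hsk
    omega
  rw [Matrix.smul_apply, this, smul_zero]

variable {n : ℕ}

lemma diag_sub_smul_one (d : Fin n → ℝ) (a : ℝ) :
    diagonal d - a • (1 : Matrix (Fin n) (Fin n) ℝ) = diagonal (fun i => d i - a) := by
  ext i j
  by_cases h : i = j
  · subst h; simp
  · simp [Matrix.one_apply, h]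

lemma eig_bounds (A : Matrix (Fin n) (Fin n) ℝ) (hA : A.IsHermitian) (a b : ℝ)
    (hlo : (A - a • (1 : Matrix (Fin n) (Fin n) ℝ)).PosSemidef)
    (hhi : (b • (1 : Matrix (Fin n) (Fin n) ℝ) - A).PosSemidef) :
    ∀ i, a ≤ hA.eigenvalues i ∧ hA.eigenvalues i ≤ b := by
  set U : Matrix (Fin n) (Fin n) ℝ := (hA.eigenvectorUnitary : Matrix (Fin n) (Fin n) ℝ) with hU_def
  have hU1 : U * star U = 1 := (Matrix.mem_unitaryGroup_iff).mp hA.eigenvectorUnitary.2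
  have hU2 : star U * U = 1 := (Matrix.mem_unitaryGroup_iff').mp hA.eigenvectorUnitary.2
  have hdiag : star U * A * U = diagonal hA.eigenvalues := by
    have := hA.conjStarAlgAut_star_eigenvectorUnitary
    rwa [RCLike.ofReal_real_eq_id, Function.id_comp] at this
  -- lower bound
  have hM1 : (star U * (A - a • (1 : Matrix (Fin n) (Fin n) ℝ)) * U).PosSemidef := by
    have := hlo.mul_mul_conjTranspose_same (star U)
    rwa [Matrix.star_eq_conjTranspose, Matrix.conjTranspose_conjTranspose] at this
  have hM1eq : star U * (A - a • (1 : Matrix (Fin n) (Fin n) ℝ)) * U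
      = diagonal (fun i => hA.eigenvalues i - a) := by
    rw [Matrix.mul_sub, Matrix.sub_mul, hdiag]
    rw [Matrix.mul_smul, Matrix.smul_mul, mul_one, hU2]
    rw [diag_sub_smul_one]
  rw [hM1eq] at hM1
  have h1 := posSemidef_diagonal_iff.mp hM1
  -- upper bound
  have hM2 : (star U * (b • (1 : Matrix (Fin n) (Fin n) ℝ) - A) * U).PosSemidef := by
    have := hhi.mul_mul_conjTranspose_same (star U)
    rwa [Matrix.star_eq_conjTranspose, Matrix.conjTranspose_conjTranspose] at this
  have hM2eq : star U * (b • (1 : Matrix (Fin n) (Fin n) ℝ) - A) * U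
      = diagonal (fun i => b - hA.eigenvalues i) := by
    rw [Matrix.mul_sub, Matrix.sub_mul, hdiag]
    rw [Matrix.mul_smul, Matrix.smul_mul, mul_one, hU2]
    ext i j
    by_cases h : i = j
    · subst h; simp
    · simp [Matrix.one_apply, h]
  rw [hM2eq] at hM2
  have h2 := posSemidef_diagonal_iff.mp hM2
  intro i
  constructor
  · linarith [h1 i]
  · linarith [h2 i]

lemma entry_bound (A : Matrix (Fin n) (Fin n) ℝ) (hA : A.IsHermitian)
    (a b ε : ℝ) (ha : 0 < a) (hε : 0 ≤ ε)
    (heig : ∀ i, a ≤ hA.eigenvalues i ∧ hA.eigenvalues i ≤ b)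
    (p : Polynomial ℝ)
    (hp : ∀ x : ℝ, a ≤ x → x ≤ b → |x⁻¹ - p.eval x| ≤ ε) :
    ∀ i j, |A⁻¹ i j - (Polynomial.aeval A p) i j| ≤ ε := by
  set U : Matrix (Fin n) (Fin n) ℝ := (hA.eigenvectorUnitary : Matrix (Fin n) (Fin n) ℝ) with hU_def
  set μ : Fin n → ℝ := hA.eigenvalues with hμ_def
  have hU1 : U * star U = 1 := (Matrix.mem_unitaryGroup_iff).mp hA.eigenvectorUnitary.2
  have hU2 : star U * U = 1 := (Matrix.mem_unitaryGroup_iff').mp hA.eigenvectorUnitary.2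
  have hspec : A = U * diagonal μ * star U := by
    have := hA.spectral_theorem
    rwa [RCLike.ofReal_real_eq_id, Function.id_comp] at this
  have hμpos : ∀ i, μ i ≠ 0 := fun i => ne_of_gt (lt_of_lt_of_le ha (heig i).1)
  -- conjugation formula for any function applied diagonally
  have hconj_mul : ∀ (d e : Fin n → ℝ),
      (U * diagonal d * star U) * (U * diagonal e * star U) = U * diagonal (fun i => d i * e i) * star U := by
    intro d e
    calc (U * diagonal d * star U) * (U * diagonal e * star U)
        = U * (diagonal d * ((star U * U) * (diagonal e * star U))) := by
          simp only [Matrix.mul_assoc]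
      _ = U * diagonal (fun i => d i * e i) * star U := by
          rw [hU2, Matrix.one_mul, ← Matrix.mul_assoc (diagonal d) (diagonal e) (star U),
            Matrix.diagonal_mul_diagonal, ← Matrix.mul_assoc]
  -- inverse
  have hinv : A⁻¹ = U * diagonal (fun i => (μ i)⁻¹) * star U := by
    apply Matrix.inv_eq_right_inv
    rw [hspec, hconj_mul]
    have : (fun i => μ i * (μ i)⁻¹) = fun _ => (1:ℝ) := by
      funext i; exact mul_inv_cancel₀ (hμpos i)
    rw [this, Matrix.diagonal_one, Matrix.mul_one, hU1]
  -- powers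
  have hpow : ∀ s : ℕ, A ^ s = U * diagonal (fun i => μ i ^ s) * star U := by
    intro s
    induction s with
    | zero =>
      simp only [pow_zero]
      rw [Matrix.diagonal_one, Matrix.mul_one, hU1]
    | succ s ih =>
      rw [pow_succ, ih, hspec, hconj_mul]
      congr 1
  -- aeval
  have haeval : Polynomial.aeval A p = U * diagonal (fun i => p.eval (μ i)) * star U := by
    rw [Polynomial.aeval_eq_sum_range' (Nat.lt_succ_self p.natDegree) A]
    have h1 : ∀ s ∈ Finset.range (p.natDegree+1),
        p.coeff s • A^s = U * (p.coeff s • diagonal (fun i => μ i ^ s)) * star U := by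
      intro s _
      rw [hpow s, Matrix.mul_smul, Matrix.smul_mul]
    rw [Finset.sum_congr rfl h1, ← Matrix.sum_mul, ← Matrix.mul_sum]
    congr 2
    ext i j
    by_cases h : i = j
    · subst h
      simp only [Matrix.diagonal_apply_eq, Matrix.sum_apply, Matrix.smul_apply,
        Matrix.diagonal_apply_eq, smul_eq_mul]
      rw [Polynomial.eval_eq_sum_range]
    · simp [Matrix.sum_apply, Matrix.diagonal_apply_ne _ h]
  -- difference
  have hdiff : A⁻¹ - Polynomial.aeval A p
      = U * diagonal (fun i => (μ i)⁻¹ - p.eval (μ i)) * star U := by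
    rw [hinv, haeval, ← Matrix.sub_mul, ← Matrix.mul_sub]
    congr 2
    ext i j
    by_cases h : i = j
    · subst h; simp
    · simp [Matrix.diagonal_apply_ne _ h]
  -- row sums of U
  have hrow : ∀ i, ∑ l, (U i l)^2 = 1 := by
    intro i
    have h := congrFun (congrFun hU1 i) i
    rw [Matrix.mul_apply] at h
    simp only [Matrix.star_apply, star_trivial, Matrix.one_apply_eq] at h
    rw [← h]
    apply Finset.sum_congr rfl
    intro l _
    ring
  intro i j
  rw [show A⁻¹ i j - (Polynomial.aeval A p) i j = (A⁻¹ - Polynomial.aeval A p) i j by simp [Matrix.sub_apply]]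
  rw [hdiff]
  set g : Fin n → ℝ := fun i => (μ i)⁻¹ - p.eval (μ i) with hg_def
  have hgbound : ∀ l, |g l| ≤ ε := fun l => hp (μ l) (heig l).1 (heig l).2
  have hentry : (U * diagonal g * star U) i j = ∑ l, U i l * g l * U j l := by
    rw [Matrix.mul_apply]
    apply Finset.sum_congr rfl
    intro l _
    rw [Matrix.mul_diagonal]
    simp only [Matrix.star_apply, star_trivial]
  rw [hentry]
  have hCS : ∑ l, |U i l| * |U j l| ≤ 1 := by
    have h2 := Finset.sum_mul_sq_le_sq_mul_sq Finset.univ (fun l => |U i l|) (fun l => |U j l|)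
    simp only [sq_abs] at h2
    rw [hrow i, hrow j, mul_one] at h2
    have h3 : (0:ℝ) ≤ ∑ l, |U i l| * |U j l| :=
      Finset.sum_nonneg fun l _ => mul_nonneg (abs_nonneg _) (abs_nonneg _)
    nlinarith
  calc |∑ l, U i l * g l * U j l| ≤ ∑ l, |U i l * g l * U j l| :=
        Finset.abs_sum_le_sum_abs _ _
    _ ≤ ∑ l, |U i l| * ε * |U j l| := by
        apply Finset.sum_le_sum
        intro l _
        rw [abs_mul, abs_mul]
        have h1 : |U i l| * |g l| ≤ |U i l| * ε :=
          mul_le_mul_of_nonneg_left (hgbound l) (abs_nonneg _)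
        exact mul_le_mul_of_nonneg_right h1 (abs_nonneg _)
    _ = ε * ∑ l, |U i l| * |U j l| := by
        rw [Finset.mul_sum]
        apply Finset.sum_congr rfl
        intro l _
        ring
    _ ≤ ε * 1 := mul_le_mul_of_nonneg_left hCS hε
    _ = ε := mul_one ε

end DMSMatrix

set_option maxHeartbeats 1600000 in
/-- Demko–Moss–Smith: exponential off-diagonal decay of the inverse of a positive
definite `m`-banded matrix with spectrum in `[a, b]`: with `r = b/a`,
`q = (√r − 1)/(√r + 1)`, `λ = q^{2/m}`, `C₀ = (1+√r)²/(2ar)` and `C = max{a⁻¹, C₀}`,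
we have `|(A⁻¹)_ij| ≤ C λ^{|i−j|}`. -/
theorem banded_inverse_decay {n : ℕ} (m : ℕ) (hm : 0 < m)
    (A : Matrix (Fin n) (Fin n) ℝ) (a b : ℝ) (ha : 0 < a) (hab : a ≤ b)
    (hsym : A.IsSymm) (hpd : A.PosDef)
    (hband : ∀ i j : Fin n, (m : ℝ) / 2 < ((((i : ℤ) - (j : ℤ)).natAbs : ℝ)) → A i j = 0)
    (hlo : (A - a • (1 : Matrix (Fin n) (Fin n) ℝ)).PosSemidef)
    (hhi : (b • (1 : Matrix (Fin n) (Fin n) ℝ) - A).PosSemidef) :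
    ∀ i j : Fin n,
      |A⁻¹ i j| ≤ (max a⁻¹ ((1 + Real.sqrt (b / a)) ^ 2 / (2 * a * (b / a)))) *
        (((Real.sqrt (b / a) - 1) / (Real.sqrt (b / a) + 1)) ^ ((2 : ℝ) / m))
          ^ (((i : ℤ) - (j : ℤ)).natAbs) := by
  intro i j
  have hA : A.IsHermitian := hpd.1
  have heig := eig_bounds A hA a b hlo hhi
  have hband' : ∀ i j : Fin n, m < 2 * ((i : ℤ) - (j : ℤ)).natAbs → A i j = 0 := by
    intro i' j' h
    apply hband
    rw [div_lt_iff₀ (by norm_num : (0:ℝ) < 2)]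
    have h' : (m:ℝ) < 2 * (((((i' : ℤ) - (j' : ℤ)).natAbs : ℕ)) : ℝ) := by exact_mod_cast h
    linarith
  set d : ℕ := ((i : ℤ) - (j : ℤ)).natAbs with hd_def
  clear_value d
  set q : ℝ := (Real.sqrt (b / a) - 1) / (Real.sqrt (b / a) + 1) with hq_def
  set Cm : ℝ := max a⁻¹ ((1 + Real.sqrt (b / a)) ^ 2 / (2 * a * (b / a))) with hCm_def
  have hCma : a⁻¹ ≤ Cm := le_max_left _ _
  have ha_inv_pos : 0 < a⁻¹ := inv_pos.mpr ha
  by_cases hd0 : d = 0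
  · -- diagonal case: use p = 0
    have h0 := entry_bound A hA a b a⁻¹ ha ha_inv_pos.le heig 0 ?_ i j
    · rw [map_zero] at h0
      simp only [Matrix.zero_apply, sub_zero] at h0
      rw [hd0, pow_zero, mul_one]
      exact le_trans h0 hCma
    · intro x hax hxb
      rw [Polynomial.eval_zero, sub_zero, abs_of_pos (inv_pos.mpr (lt_of_lt_of_le ha hax))]
      exact inv_anti₀ ha hax
  · -- off-diagonal
    rcases eq_or_lt_of_le hab with heq | hlt
    · -- a = b : A⁻¹ is a⁻¹ • 1, off-diagonal entry 0
      subst heq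
      have hij : i ≠ j := by
        intro he; subst he; simp [hd_def] at hd0
      have h0 := entry_bound A hA a a 0 ha le_rfl heig (Polynomial.C a⁻¹) ?_ i j
      · have hone : (Polynomial.aeval A (Polynomial.C a⁻¹)) i j = 0 := by
          rw [Polynomial.aeval_C]
          simp [Matrix.algebraMap_matrix_apply, hij]
        rw [hone, sub_zero] at h0
        have hzero : |A⁻¹ i j| = 0 := le_antisymm h0 (abs_nonneg _)
        rw [hzero]
        have hba1 : a / a = 1 := div_self ha.ne'
        have hq0 : q = 0 := by
          rw [hq_def, hba1, Real.sqrt_one]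
          norm_num
        have hl0 : q ^ ((2:ℝ)/m) = 0 := by
          rw [hq0]
          exact Real.zero_rpow (by positivity)
        rw [hl0, zero_pow hd0, mul_zero]
      · intro x hax hxb
        have hxa : x = a := le_antisymm hxb hax
        subst hxa
        simp
    · -- a < b : main case
      -- choose k
      set k : ℕ := (2*d - 1) / m with hk_def
      have hdm : m * k + (2*d-1) % m = 2*d-1 := by rw [hk_def]; exact Nat.div_add_mod _ _
      have hmod := Nat.mod_lt (2*d - 1) hm
      have hmk : m * (k + 1) = m * k + m := by ring
      have hk1 : m * k < 2 * d := by omega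
      have hk2 : 2 * d ≤ m * (k + 1) := by omega
      obtain ⟨p, hpdeg, hperr⟩ := inv_approx a b ha hlt k
      set sa := Real.sqrt a with hsa_def
      set sb := Real.sqrt b with hsb_def
      have hsa2 : sa^2 = a := Real.sq_sqrt ha.le
      have hsb2 : sb^2 = b := Real.sq_sqrt (lt_trans ha hlt).le
      have hsa0 : 0 < sa := Real.sqrt_pos.mpr ha
      have hsb0 : 0 < sb := Real.sqrt_pos.mpr (lt_trans ha hlt)
      have hsalt : sa < sb := by
        have := Real.sqrt_lt_sqrt ha.le hlt
        simpa [hsa_def, hsb_def] using this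
      set u : ℝ := (sb - sa)/(sb + sa) with hu_def
      have hu0 : 0 < u := div_pos (by linarith) (by linarith)
      have hu1 : u < 1 := by rw [div_lt_one (by linarith)]; linarith
      set C₀ : ℝ := (sa + sb)^2/(2*a*b) with hC0_def
      have hC0pos : 0 < C₀ := by
        apply div_pos
        · nlinarith
        · nlinarith
      have hεpos : 0 ≤ C₀ * u^(k+1) := mul_nonneg hC0pos.le (pow_nonneg hu0.le _)
      -- sqrt(b/a) = sb/sa
      have hsqrtdiv : Real.sqrt (b/a) = sb / sa := by
        rw [hsb_def, hsa_def]
        exact Real.sqrt_div (lt_trans ha hlt).le a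
      have hqu : q = u := by
        rw [hq_def, hsqrtdiv, hu_def]
        have h1 : sa ≠ 0 := hsa0.ne'
        have h2 : sb + sa ≠ 0 := by positivity
        have h3 : sb / sa + 1 ≠ 0 := by positivity
        field_simp
      have hC0eq : (1 + Real.sqrt (b/a))^2/(2*a*(b/a)) = C₀ := by
        rw [hsqrtdiv, hC0_def]
        rw [show a = sa^2 from hsa2.symm, show b = sb^2 from hsb2.symm]
        have h1 : sa ≠ 0 := hsa0.ne'
        have h2 : sb ≠ 0 := hsb0.ne'
        field_simp
      -- entry bound
      have herr' : ∀ x : ℝ, a ≤ x → x ≤ b → |x⁻¹ - p.eval x| ≤ C₀ * u^(k+1) := by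
        intro x h1 h2
        exact hperr x ⟨h1, h2⟩
      have hmain := entry_bound A hA a b (C₀ * u^(k+1)) ha hεpos heig p herr' i j
      have hzero : (Polynomial.aeval A p) i j = 0 :=
        aeval_band m k A hband' p hpdeg i j (by rw [hd_def] at hk1; exact hk1)
      rw [hzero, sub_zero] at hmain
      -- exponent comparison
      have hexp : (q ^ ((2:ℝ)/m))^d = u ^ (((2:ℝ)/m) * d) := by
        rw [hqu, ← Real.rpow_natCast (u ^ ((2:ℝ)/m)) d, ← Real.rpow_mul hu0.le]
      have hpow_le : u^(k+1) ≤ u ^ (((2:ℝ)/m) * d) := by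
        rw [← Real.rpow_natCast u (k+1)]
        apply Real.rpow_le_rpow_of_exponent_ge hu0 hu1.le
        rw [div_mul_eq_mul_div, div_le_iff₀ (show (0:ℝ) < m by exact_mod_cast hm)]
        have hcast : ((2*d : ℕ) : ℝ) ≤ ((m*(k+1) : ℕ) : ℝ) := Nat.cast_le.mpr hk2
        push_cast at hcast ⊢
        linarith
      have hC0le : C₀ ≤ Cm := by
        rw [hCm_def, ← hC0eq]
        exact le_max_right _ _
      calc |A⁻¹ i j| ≤ C₀ * u^(k+1) := hmain
        _ ≤ C₀ * u ^ (((2:ℝ)/m) * d) := mul_le_mul_of_nonneg_left hpow_le hC0pos.le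
        _ ≤ Cm * u ^ (((2:ℝ)/m) * d) :=
            mul_le_mul_of_nonneg_right hC0le (Real.rpow_nonneg hu0.le _)
        _ = Cm * (q ^ ((2:ℝ)/m))^d := by rw [hexp]
end

section
/- Suppose |Cov(x_k, x_l)| ≤ C|k−l|^{−τ} for all k ≠ l with τ > 1.5 and Var(x_k) ≤ C, and suppose the coefficients satisfy |φ_{ij}| ≤ C((log j + 1)/j)^{τ−1} for all j ≥ 1. Then E|Σ_{j=b+1}^{i−1} φ_{ij} x_{i−j}|² ≤ C' ((log b)^{τ−1} b^{−(τ−1.5)})² for some constant C' depending only on C and τ, uniformly in i and n. -/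
/-!
Expanding the square turns the left side into the quadratic form
`∑_{j,l} φ_j φ_l Cov(x_{i-j}, x_{i-l})`. The covariances are dominated by the symmetric kernel
`C (δ_{jl} + |j - l|^{-τ})`, whose row sums are at most `C (1 + ∑_{m ∈ ℤ} |m|^{-τ})` since `τ > 1`;
with `2 |φ_j φ_l| ≤ φ_j² + φ_l²` (Schur's test) the form is at most a constant times
`∑_{j > b} φ_j² ≤ C² ∑_{j > b} ((log j + 1) / j)^{2(τ-1)}`. Bounding `log j + 1` by a multiple of
`log b · (j / b)^δ` and comparing the remaining sum with `∫_b^∞ t^{-a} dt` shows that this tail is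
`O((log b)^{2(τ-1)} b^{1-2(τ-1)})`, the square of the claimed rate.
-/

open MeasureTheory Finset

lemma sum_Icc_rpow_neg_le {a : ℝ} (ha : 1 < a) {b : ℕ} (hb : 1 ≤ b) (N : ℕ) :
    ∑ j ∈ Icc (b + 1) N, (j : ℝ) ^ (-a) ≤ (b : ℝ) ^ (1 - a) / (a - 1) := by
  have hb0 : (0 : ℝ) < b := by exact_mod_cast hb
  rcases le_or_gt b N with hbN | hNb
  · have hanti : AntitoneOn (fun t : ℝ => t ^ (-a)) (Set.Icc (b : ℝ) N) := fun u hu v _ huv =>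
      Real.rpow_le_rpow_of_nonpos (hb0.trans_le hu.1) huv (by linarith)
    have hzero : (0 : ℝ) ∉ Set.uIcc (b : ℝ) N := by
      rw [Set.uIcc_of_le (by exact_mod_cast hbN)]
      exact fun h => hb0.not_ge h.1
    calc ∑ j ∈ Icc (b + 1) N, (j : ℝ) ^ (-a)
        = ∑ j ∈ Ico b N, ((j + 1 : ℕ) : ℝ) ^ (-a) := by
          rw [sum_Ico_add' (fun j : ℕ => (j : ℝ) ^ (-a)), Ico_add_one_right_eq_Icc]
      _ ≤ ∫ t in (b : ℝ)..N, t ^ (-a) := hanti.sum_le_integral_Ico hbN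
      _ = ((b : ℝ) ^ (1 - a) - (N : ℝ) ^ (1 - a)) / (a - 1) := by
          rw [integral_rpow (Or.inr ⟨by linarith, hzero⟩), neg_add_eq_sub,
            ← neg_div_neg_eq, neg_sub, neg_sub]
      _ ≤ (b : ℝ) ^ (1 - a) / (a - 1) := by
          gcongr
          exact sub_le_self _ (by positivity)
  · rw [Icc_eq_empty (by omega), sum_empty]
    exact div_nonneg (by positivity) (by linarith)

lemma log_add_one_le_mul_rpow {δ b t : ℝ} (hδ : 0 < δ) (hb : 2 ≤ b) (hbt : b ≤ t) :
    Real.log t + 1 ≤ (1 + (1 + δ⁻¹) / Real.log 2) * Real.log b * (t / b) ^ δ := by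
  have hb0 : 0 < b := by linarith
  have hlog2 : 0 < Real.log 2 := Real.log_pos one_lt_two
  have hL : Real.log 2 ≤ Real.log b := Real.log_le_log two_pos hb
  have hL' : 1 ≤ Real.log b / Real.log 2 := (one_le_div hlog2).mpr hL
  have hu : 1 ≤ (t / b) ^ δ := Real.one_le_rpow ((one_le_div hb0).mpr hbt) hδ.le
  have hsplit : Real.log t = Real.log b + Real.log (t / b) := by
    rw [Real.log_div (by linarith) hb0.ne']; ring
  have hratio : Real.log (t / b) ≤ δ⁻¹ * (t / b) ^ δ := by
    rw [inv_mul_eq_div]; exact Real.log_le_rpow_div (div_nonneg (by linarith) hb0.le) hδ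
  have hexpand : (1 + (1 + δ⁻¹) / Real.log 2) * Real.log b * (t / b) ^ δ
      = Real.log b * (t / b) ^ δ + (1 + δ⁻¹) * (Real.log b / Real.log 2) * (t / b) ^ δ := by
    ring
  have hLu : Real.log b ≤ Real.log b * (t / b) ^ δ :=
    le_mul_of_one_le_right (hlog2.le.trans hL) hu
  have hcu : (1 + δ⁻¹) * (t / b) ^ δ ≤ (1 + δ⁻¹) * (Real.log b / Real.log 2) * (t / b) ^ δ := by
    rw [mul_right_comm]
    exact le_mul_of_one_le_right (by positivity) hL'
  rw [hsplit, hexpand]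
  linarith

lemma exists_sum_Icc_log_add_one_div_rpow_le {s : ℝ} (hs : 1 < s) :
    ∃ K : ℝ, 0 < K ∧ ∀ b N : ℕ, 2 ≤ b →
      ∑ j ∈ Icc (b + 1) N, ((Real.log j + 1) / j) ^ s ≤
        K * (Real.log b ^ s * (b : ℝ) ^ (1 - s)) := by
  -- Trade a factor `(j / b) ^ δ` for the logarithm; the exponent `a = (1 - δ) s` stays above 1.
  set δ : ℝ := (s - 1) / (2 * s)
  set a : ℝ := (1 - δ) * s
  have hδ : 0 < δ := div_pos (by linarith) (by linarith)
  have ha : a = (s + 1) / 2 := by simp only [a, δ]; field_simp; ring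
  have ha1 : 1 < a := by rw [ha]; linarith
  set c : ℝ := 1 + (1 + δ⁻¹) / Real.log 2
  have hc : 0 < c := by have := Real.log_pos one_lt_two; positivity
  refine ⟨c ^ s / (a - 1), div_pos (by positivity) (by linarith), fun b N hb => ?_⟩
  have hb0 : (0 : ℝ) < b := by positivity
  have hb2 : (2 : ℝ) ≤ b := by exact_mod_cast hb
  have hL : 0 ≤ Real.log b := Real.log_nonneg (by linarith)
  have hterm : ∀ j ∈ Icc (b + 1) N, ((Real.log j + 1) / j) ^ s ≤
      (c * Real.log b * (b : ℝ) ^ (-δ)) ^ s * (j : ℝ) ^ (-a) := by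
    intro j hj
    have hbj : (b : ℝ) ≤ j := by exact_mod_cast (by grind : b ≤ j)
    have hj0 : (0 : ℝ) < j := hb0.trans_le hbj
    calc ((Real.log j + 1) / j) ^ s
        ≤ (c * Real.log b * (j / b : ℝ) ^ δ / j) ^ s := by
          gcongr
          exact log_add_one_le_mul_rpow hδ hb2 hbj
      _ = (c * Real.log b * (b : ℝ) ^ (-δ) * (j : ℝ) ^ (δ - 1)) ^ s := by
          rw [Real.rpow_sub_one hj0.ne', Real.div_rpow hj0.le hb0.le, Real.rpow_neg hb0.le]
          ring_nf
      _ = (c * Real.log b * (b : ℝ) ^ (-δ)) ^ s * (j : ℝ) ^ (-a) := by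
          rw [Real.mul_rpow (by positivity) (by positivity), ← Real.rpow_mul hj0.le]
          simp only [a]
          ring_nf
  calc ∑ j ∈ Icc (b + 1) N, ((Real.log j + 1) / j) ^ s
      ≤ ∑ j ∈ Icc (b + 1) N, (c * Real.log b * (b : ℝ) ^ (-δ)) ^ s * (j : ℝ) ^ (-a) :=
        sum_le_sum hterm
    _ ≤ (c * Real.log b * (b : ℝ) ^ (-δ)) ^ s * ((b : ℝ) ^ (1 - a) / (a - 1)) := by
        rw [← mul_sum]
        gcongr
        exact sum_Icc_rpow_neg_le ha1 (by omega) N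
    _ = c ^ s / (a - 1) * (Real.log b ^ s * (b : ℝ) ^ (1 - s)) := by
        rw [Real.mul_rpow (by positivity) (by positivity), Real.mul_rpow hc.le hL,
          ← Real.rpow_mul hb0.le]
        have hexp : (b : ℝ) ^ (-δ * s) * (b : ℝ) ^ (1 - a) = (b : ℝ) ^ (1 - s) := by
          rw [← Real.rpow_add hb0]
          simp only [a]
          ring_nf
        rw [← hexp]
        ring

lemma integral_sq_sum_eq_sum_sum {Ω ι : Type*} [MeasurableSpace Ω] {μ : Measure Ω} (J : Finset ι)
    (a : ι → ℝ) (y : ι → Ω → ℝ) (hy : ∀ j ∈ J, ∀ l ∈ J, Integrable (fun ω => y j ω * y l ω) μ) :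
    ∫ ω, (∑ j ∈ J, a j * y j ω) ^ 2 ∂μ =
      ∑ j ∈ J, ∑ l ∈ J, a j * a l * ∫ ω, y j ω * y l ω ∂μ := by
  have hsq : ∀ ω, (∑ j ∈ J, a j * y j ω) ^ 2 =
      ∑ j ∈ J, ∑ l ∈ J, a j * a l * (y j ω * y l ω) := fun ω => by
    rw [sq, sum_mul_sum]
    exact sum_congr rfl fun j _ => sum_congr rfl fun l _ => by ring
  simp_rw [hsq]
  rw [integral_finsetSum _ fun j hj =>
    integrable_finsetSum _ fun l hl => (hy j hj l hl).const_mul _]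
  refine sum_congr rfl fun j hj => ?_
  rw [integral_finsetSum _ fun l hl => (hy j hj l hl).const_mul _]
  simp_rw [integral_const_mul]

lemma sum_sum_mul_le_of_abs_le {ι : Type*} (J : Finset ι) (a : ι → ℝ) (c w : ι → ι → ℝ) {R : ℝ}
    (hc : ∀ j ∈ J, ∀ l ∈ J, |c j l| ≤ w j l) (hw : ∀ j l, w j l = w l j)
    (hR : ∀ j ∈ J, ∑ l ∈ J, w j l ≤ R) :
    ∑ j ∈ J, ∑ l ∈ J, a j * a l * c j l ≤ R * ∑ j ∈ J, a j ^ 2 := by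
  have hpair : ∀ j ∈ J, ∀ l ∈ J,
      a j * a l * c j l ≤ (a j ^ 2 * w j l + a l ^ 2 * w l j) / 2 := by
    intro j hj l hl
    have hamgm : |a j * a l| ≤ (a j ^ 2 + a l ^ 2) / 2 := by
      rw [abs_mul]
      nlinarith [sq_nonneg (|a j| - |a l|), sq_abs (a j), sq_abs (a l)]
    calc a j * a l * c j l ≤ |a j * a l| * |c j l| := by rw [← abs_mul]; exact le_abs_self _
      _ ≤ (a j ^ 2 + a l ^ 2) / 2 * w j l :=
        mul_le_mul hamgm (hc j hj l hl) (abs_nonneg _) (by positivity)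
      _ = (a j ^ 2 * w j l + a l ^ 2 * w l j) / 2 := by rw [hw l j]; ring
  calc ∑ j ∈ J, ∑ l ∈ J, a j * a l * c j l
      ≤ ∑ j ∈ J, ∑ l ∈ J, (a j ^ 2 * w j l + a l ^ 2 * w l j) / 2 :=
        sum_le_sum fun j hj => sum_le_sum fun l hl => hpair j hj l hl
    _ = ∑ j ∈ J, a j ^ 2 * ∑ l ∈ J, w j l := by
        simp_rw [add_div, sum_add_distrib]
        rw [sum_comm (f := fun j l => a l ^ 2 * w l j / 2), ← sum_add_distrib]
        simp_rw [← sum_add_distrib, mul_sum]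
        exact sum_congr rfl fun j _ => sum_congr rfl fun l _ => by ring
    _ ≤ ∑ j ∈ J, a j ^ 2 * R :=
        sum_le_sum fun j hj => mul_le_mul_of_nonneg_left (hR j hj) (sq_nonneg _)
    _ = R * ∑ j ∈ J, a j ^ 2 := by rw [mul_sum]; simp_rw [mul_comm]

noncomputable def decayKernel (C τ : ℝ) (j l : ℕ) : ℝ :=
  C * ((if j = l then 1 else 0) + |(j : ℝ) - l| ^ (-τ))

lemma decayKernel_comm (C τ : ℝ) (j l : ℕ) : decayKernel C τ j l = decayKernel C τ l j := by
  simp only [decayKernel, eq_comm (a := j), abs_sub_comm (j : ℝ)]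

lemma sum_abs_sub_rpow_le_tsum {τ : ℝ} (hτ : 1 < τ) (J : Finset ℕ) (j : ℕ) :
    ∑ l ∈ J, |(j : ℝ) - l| ^ (-τ) ≤ ∑' m : ℤ, |(m : ℝ)| ^ (-τ) := by
  have hinj : Set.InjOn (fun l : ℕ => (j : ℤ) - l) J := fun u _ v _ h => by simp_all
  calc ∑ l ∈ J, |(j : ℝ) - l| ^ (-τ)
      = ∑ m ∈ J.image fun l : ℕ => (j : ℤ) - l, |(m : ℝ)| ^ (-τ) := by
        rw [sum_image hinj]; push_cast; rfl
    _ ≤ ∑' m : ℤ, |(m : ℝ)| ^ (-τ) :=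
        (Real.summable_abs_int_rpow hτ).sum_le_tsum _ fun m _ => by positivity

lemma sum_decayKernel_le {C τ : ℝ} (hC : 0 ≤ C) (hτ : 1 < τ) (J : Finset ℕ) (j : ℕ) :
    ∑ l ∈ J, decayKernel C τ j l ≤ C * (1 + ∑' m : ℤ, |(m : ℝ)| ^ (-τ)) := by
  simp only [decayKernel]
  rw [← mul_sum, sum_add_distrib, sum_ite_eq]
  gcongr
  · split_ifs <;> norm_num
  · exact sum_abs_sub_rpow_le_tsum hτ J j

lemma abs_integral_mul_le_decayKernel {Ω : Type*} [MeasurableSpace Ω] {μ : Measure Ω}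
    {x : ℕ → Ω → ℝ} {C τ : ℝ}
    (hcov : ∀ k l : ℕ, k ≠ l →
      |∫ ω, x k ω * x l ω ∂μ| ≤ C * ((((k : ℤ) - (l : ℤ)).natAbs : ℝ)) ^ (-τ))
    (hvar : ∀ k, ∫ ω, (x k ω) ^ 2 ∂μ ≤ C) {i j l : ℕ} (hj : j ≤ i) (hl : l ≤ i) :
    |∫ ω, x (i - j) ω * x (i - l) ω ∂μ| ≤ decayKernel C τ j l := by
  rcases eq_or_ne j l with rfl | hne
  · have hsq : 0 ≤ ∫ ω, x (i - j) ω ^ 2 ∂μ := integral_nonneg fun ω => sq_nonneg _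
    simp only [decayKernel, if_pos, ← sq, abs_of_nonneg hsq]
    calc ∫ ω, x (i - j) ω ^ 2 ∂μ ≤ C := hvar _
      _ ≤ C * (1 + |(j : ℝ) - j| ^ (-τ)) :=
        le_mul_of_one_le_right (hsq.trans (hvar _)) (le_add_of_nonneg_right (by positivity))
  · have hdist : ((((i - j : ℕ) : ℤ) - ((i - l : ℕ) : ℤ)).natAbs : ℝ) = |(j : ℝ) - l| := by
      rw [Nat.cast_natAbs]
      push_cast [Nat.cast_sub hj, Nat.cast_sub hl]
      rw [← abs_neg]; ring_nf
    calc |∫ ω, x (i - j) ω * x (i - l) ω ∂μ| ≤ C * |(j : ℝ) - l| ^ (-τ) := by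
          rw [← hdist]; exact hcov _ _ (by omega)
      _ = decayKernel C τ j l := by simp [decayKernel, hne]

lemma sq_le_sq_mul_rpow_two_mul {y C g p : ℝ} (hg : 0 ≤ g) (h : |y| ≤ C * g ^ p) :
    y ^ 2 ≤ C ^ 2 * g ^ (2 * p) := by
  calc y ^ 2 = |y| ^ 2 := (sq_abs y).symm
    _ ≤ (C * g ^ p) ^ 2 := pow_le_pow_left₀ (abs_nonneg y) h 2
    _ = C ^ 2 * g ^ (2 * p) := by rw [mul_pow, ← Real.rpow_mul_natCast hg]; ring_nf

/-- Key truncation-error estimate for the AR(b) approximation: under covariance decay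
`|Cov(x_k, x_l)| ≤ C|k−l|^{−τ}` with `τ > 1.5`, `Var(x_k) ≤ C`, and coefficient decay
`|φ_j| ≤ C((log j + 1)/j)^{τ−1}`, we have
`E|∑_{j=b+1}^{i−1} φ_j x_{i−j}|² ≤ C'((log b)^{τ−1} b^{−(τ−1.5)})²`, with `C'`
depending only on `C` and `τ`. -/
theorem ar_truncation_error_bound (C τ : ℝ) (hC : 0 < C) (hτ : 1.5 < τ) :
    ∃ C' : ℝ, 0 < C' ∧
      ∀ (Ω : Type) (_ : MeasurableSpace Ω) (μ : Measure Ω), IsProbabilityMeasure μ →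
        ∀ (x : ℕ → Ω → ℝ) (φ : ℕ → ℝ) (b i : ℕ),
          2 ≤ b → b < i →
          (∀ k l, Integrable (fun ω => x k ω * x l ω) μ) →
          (∀ k, ∫ ω, x k ω ∂μ = 0) →
          (∀ k l : ℕ, k ≠ l →
            |∫ ω, x k ω * x l ω ∂μ| ≤ C * ((((k : ℤ) - (l : ℤ)).natAbs : ℝ)) ^ (-τ)) →
          (∀ k, ∫ ω, (x k ω) ^ 2 ∂μ ≤ C) →
          (∀ j : ℕ, 1 ≤ j → |φ j| ≤ C * ((Real.log j + 1) / j) ^ (τ - 1)) →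
          ∫ ω, (∑ j ∈ Finset.Icc (b + 1) (i - 1), φ j * x (i - j) ω) ^ 2 ∂μ ≤
            C' * ((Real.log b) ^ (τ - 1) * (b : ℝ) ^ (-(τ - 1.5))) ^ 2 := by
  obtain ⟨K, hK, hcoeff⟩ := exists_sum_Icc_log_add_one_div_rpow_le (s := 2 * (τ - 1)) (by linarith)
  set Z : ℝ := ∑' m : ℤ, |(m : ℝ)| ^ (-τ)
  have hZ : 0 ≤ Z := tsum_nonneg fun m => by positivity
  refine ⟨C * (1 + Z) * (C ^ 2 * K), by positivity, ?_⟩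
  intro Ω _ μ _ x φ b i hb _ hint _ hcov hvar hφ
  set J := Icc (b + 1) (i - 1)
  have hJ : ∀ j ∈ J, 1 ≤ j ∧ j ≤ i := fun j hj => by grind
  have hφJ : ∑ j ∈ J, φ j ^ 2 ≤
      C ^ 2 * (K * (Real.log b ^ (2 * (τ - 1)) * (b : ℝ) ^ (1 - 2 * (τ - 1)))) := by
    grw [← hcoeff b (i - 1) hb, mul_sum]
    exact sum_le_sum fun j hj => sq_le_sq_mul_rpow_two_mul (by positivity) (hφ j (hJ j hj).1)
  have hrhs : (Real.log b ^ (τ - 1) * (b : ℝ) ^ (-(τ - 1.5))) ^ 2 =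
      Real.log b ^ (2 * (τ - 1)) * (b : ℝ) ^ (1 - 2 * (τ - 1)) := by
    have hL : 0 ≤ Real.log b := Real.log_nonneg (by exact_mod_cast (by omega : 1 ≤ b))
    rw [mul_pow, ← Real.rpow_mul_natCast hL, ← Real.rpow_mul_natCast (Nat.cast_nonneg b)]
    norm_num
    ring_nf
  calc ∫ ω, (∑ j ∈ J, φ j * x (i - j) ω) ^ 2 ∂μ
      = ∑ j ∈ J, ∑ l ∈ J, φ j * φ l * ∫ ω, x (i - j) ω * x (i - l) ω ∂μ :=
        integral_sq_sum_eq_sum_sum J φ _ fun j _ l _ => hint _ _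
    _ ≤ C * (1 + Z) * ∑ j ∈ J, φ j ^ 2 :=
        sum_sum_mul_le_of_abs_le J φ _ (decayKernel C τ)
          (fun j hj l hl => abs_integral_mul_le_decayKernel hcov hvar (hJ j hj).2 (hJ l hl).2)
          (decayKernel_comm C τ) fun j _ => sum_decayKernel_le hC.le (by linarith) J j
    _ ≤ C * (1 + Z) * (C ^ 2 * (K * (Real.log b ^ (2 * (τ - 1)) * (b : ℝ) ^ (1 - 2 * (τ - 1))))) :=
        mul_le_mul_of_nonneg_left hφJ (by positivity)
    _ = C * (1 + Z) * (C ^ 2 * K) * (Real.log b ^ (τ - 1) * (b : ℝ) ^ (-(τ - 1.5))) ^ 2 := by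
        rw [hrhs]; ring
end
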